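/- arXiv:1903.10999 — 2 statements merged into one kernel-verified Lean document; each statement's English description precedes it below -/
import Mathlib

section
/- Let R be a discrete valuation ring with uniformizer l. If A and B are finite free R-modules and Γ ⊆ (A ⊗_R B) is an R-submodule of the form Γ = Γ_A ⊗_R Γ_B for full-rank free submodules Γ_A ⊆ A, Γ_B ⊆ B, then for any full-rank free submodule Γ' with Γ ⊆ Γ' ⊆ A ⊗_R B and Γ'/Γ killed by l and nonzero, Γ' cannot itself be of the form Γ'_A ⊗_R Γ'_B with Γ_A ⊆ Γ'_A ⊆ A and Γ_B ⊆ Γ'_B ⊆ B unless Γ'/Γ has length at least min(rank A, rank B). -/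
/-!
If `Γ_A ⊗ Γ_B ⊊ Γ'_A ⊗ Γ'_B`, one of the inclusions, say `Γ_A ⊊ Γ'_A`, is strict; pick
`v ∈ Γ'_A \ Γ_A` and a Smith normal form basis `b` of `Γ_B` inside `B`. The classes of
`v ⊗ b_j` span a strictly increasing chain in `Γ' / Γ`: if `v ⊗ w ∈ Γ_A ⊗ Γ_B`, contracting
with the coordinate functional of `B` that restricts to `a_i • b.coord i` on `Γ_B` (`a_i ≠ 0`
the Smith invariant) shows `b.coord i w • v ∈ Γ_A`, so no coordinate of `w` can be `1`.
This yields a chain of length `rank Γ_B = rank B`.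
-/

open TensorProduct

namespace Module.Basis.SmithNormalForm

variable {R M ι : Type*} [CommRing R] [Nontrivial R] [AddCommGroup M] [Module R M]
  {N : Submodule R M} {n : ℕ}

lemma a_ne_zero (snf : Basis.SmithNormalForm N ι n) (i : Fin n) : snf.a i ≠ 0 := by
  intro h
  apply snf.bN.ne_zero i
  ext
  simp [snf.snf, h]

end Module.Basis.SmithNormalForm

section Chains

variable {R M Q : Type*} [CommRing R] [AddCommGroup M] [Module R M] [AddCommGroup Q] [Module R Q]
  {t : ℕ}

lemma exists_strictMono_of_repr_ne_one (τ : M →ₗ[R] Q) (b : Module.Basis (Fin t) R M)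
    (hτ : ∀ w ∈ LinearMap.ker τ, ∀ i, b.repr w i ≠ 1) :
    ∃ s : Fin (t + 1) → Submodule R Q, StrictMono s := by
  refine ⟨fun k => (Submodule.span R (b '' {j | (j : ℕ) < k})).map τ,
    Fin.strictMono_iff_lt_succ.2 fun i => SetLike.lt_iff_le_and_exists.2
      ⟨Submodule.map_mono (Submodule.span_mono (Set.image_mono fun j hj => ?_)), τ (b i),
        Submodule.mem_map_of_mem (Submodule.subset_span ⟨i, by simp, rfl⟩), ?_⟩⟩
  · simp only [Set.mem_ofPred_eq, Fin.val_castSucc, Fin.val_succ] at hj ⊢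
    omega
  · rintro ⟨w, hw, hτw⟩
    have hwi : b.repr w i = 0 := by
      rw [SetLike.mem_coe, b.mem_span_image] at hw
      exact Finsupp.notMem_support_iff.1 fun hi => absurd (hw hi) (by simp)
    exact hτ (b i - w) (by simp [hτw]) i (by simp [hwi])

lemma exists_strictMono_quotient_of_repr_ne_one {X : Type*} [AddCommGroup X] [Module R X]
    (Γ Γ' : Submodule R X) (g : M →ₗ[R] X) (hg : ∀ w, g w ∈ Γ') (b : Module.Basis (Fin t) R M)
    (hΓ : ∀ w, g w ∈ Γ → ∀ i, b.repr w i ≠ 1) :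
    ∃ s : Fin (t + 1) → Submodule R (Γ' ⧸ Γ.comap Γ'.subtype), StrictMono s :=
  exists_strictMono_of_repr_ne_one ((Γ.comap Γ'.subtype).mkQ ∘ₗ g.codRestrict Γ' hg) b
    fun w hw => hΓ w (by simpa using hw)

end Chains

section TensorLattices

variable {R A B : Type*} [CommRing R] [IsDomain R] [AddCommGroup A] [Module R A]
  [AddCommGroup B] [Module R B] {ΓA : Submodule R A} {ΓB : Submodule R B} {a : R}

lemma smul_mem_left_of_tmul_mem_range_map [Module.IsTorsionFree R A] (ha : a ≠ 0)
    {f : B →ₗ[R] R} {φ : ΓB →ₗ[R] R} (hf : f ∘ₗ ΓB.subtype = a • φ) {v : A} {w : ΓB}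
    (h : v ⊗ₜ[R] (w : B) ∈ LinearMap.range (map ΓA.subtype ΓB.subtype)) : φ w • v ∈ ΓA := by
  have hfq (q : ΓB) : f q = a * φ q := by simpa using LinearMap.congr_fun hf q
  let contract : A ⊗[R] B →ₗ[R] A := (TensorProduct.rid R A).toLinearMap ∘ₗ f.lTensor A
  have hcontract : contract ∘ₗ map ΓA.subtype ΓB.subtype =
      a • (ΓA.subtype ∘ₗ (TensorProduct.rid R ΓA).toLinearMap ∘ₗ φ.lTensor ΓA) := by
    ext p q
    simp [contract, hfq, smul_smul]
  obtain ⟨x, hx⟩ := h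
  have hvx : a • (φ w • v) = a • (TensorProduct.rid R ΓA (φ.lTensor ΓA x) : A) := by
    calc a • (φ w • v) = contract (v ⊗ₜ[R] (w : B)) := by
          simp [contract, hfq, smul_smul]
      _ = _ := by rw [← hx, ← LinearMap.comp_apply, hcontract]; rfl
  exact smul_right_injective A ha hvx ▸ Submodule.coe_mem _

lemma smul_mem_right_of_tmul_mem_range_map [Module.IsTorsionFree R B] (ha : a ≠ 0)
    {f : A →ₗ[R] R} {φ : ΓA →ₗ[R] R} (hf : f ∘ₗ ΓA.subtype = a • φ) {v : B} {w : ΓA}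
    (h : (w : A) ⊗ₜ[R] v ∈ LinearMap.range (map ΓA.subtype ΓB.subtype)) : φ w • v ∈ ΓB := by
  obtain ⟨x, hx⟩ := h
  refine smul_mem_left_of_tmul_mem_range_map ha hf ⟨TensorProduct.comm R _ _ x, ?_⟩
  rw [map_comm, hx, comm_tmul]

end TensorLattices

theorem stmt2_general {R : Type*} [CommRing R] [IsDomain R] [IsDiscreteValuationRing R]
    {A B : Type*} [AddCommGroup A] [Module R A] [Module.Free R A] [Module.Finite R A]
    [AddCommGroup B] [Module R B] [Module.Free R B] [Module.Finite R B]
    (ΓA : Submodule R A) (ΓB : Submodule R B)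
    (hΓA : Module.finrank R ΓA = Module.finrank R A)
    (hΓB : Module.finrank R ΓB = Module.finrank R B)
    (Γ' : Submodule R (A ⊗[R] B))
    (hne : LinearMap.range (TensorProduct.map ΓA.subtype ΓB.subtype) ≠ Γ')
    (Γ'A : Submodule R A) (Γ'B : Submodule R B)
    (hAA : ΓA ≤ Γ'A) (hBB : ΓB ≤ Γ'B)
    (htens : Γ' = LinearMap.range (TensorProduct.map Γ'A.subtype Γ'B.subtype)) :
    ∃ s : Fin (min (Module.finrank R A) (Module.finrank R B) + 1) →
      Submodule R (Γ' ⧸ (LinearMap.range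
        (TensorProduct.map ΓA.subtype ΓB.subtype)).comap Γ'.subtype),
      StrictMono s := by
  suffices ∃ t ≥ min (Module.finrank R A) (Module.finrank R B), ∃ s : Fin (t + 1) →
      Submodule R (Γ' ⧸ (LinearMap.range (map ΓA.subtype ΓB.subtype)).comap Γ'.subtype),
      StrictMono s by
    obtain ⟨t, ht, s, hs⟩ := this
    exact ⟨s ∘ Fin.castLE (by omega), hs.comp (Fin.strictMono_castLE _)⟩
  have hlt : ΓA < Γ'A ∨ ΓB < Γ'B := by
    refine or_iff_not_imp_left.2 fun hA => hBB.lt_of_ne ?_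
    rintro rfl
    obtain rfl := hAA.eq_of_not_lt hA
    exact hne htens.symm
  rcases hlt with hA | hB
  · obtain ⟨v, hv', hv⟩ := SetLike.exists_of_lt hA
    obtain ⟨t, snf⟩ := ΓB.smithNormalForm (Module.finBasis R B)
    refine ⟨t, ?_, exists_strictMono_quotient_of_repr_ne_one _ Γ'
      (TensorProduct.mk R A B v ∘ₗ ΓB.subtype) (fun w => ?_) snf.bN fun w hw i h1 => hv ?_⟩
    · rw [← hΓB, Module.finrank_eq_card_basis snf.bN, Fintype.card_fin]
      exact min_le_right _ _
    · rw [htens]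
      exact ⟨⟨v, hv'⟩ ⊗ₜ ⟨w, hBB w.2⟩, rfl⟩
    · simpa [h1] using smul_mem_left_of_tmul_mem_range_map (snf.a_ne_zero i)
        snf.coord_apply_embedding_eq_smul_coord hw
  · obtain ⟨v, hv', hv⟩ := SetLike.exists_of_lt hB
    obtain ⟨t, snf⟩ := ΓA.smithNormalForm (Module.finBasis R A)
    refine ⟨t, ?_, exists_strictMono_quotient_of_repr_ne_one _ Γ'
      ((TensorProduct.mk R A B).flip v ∘ₗ ΓA.subtype) (fun w => ?_) snf.bN fun w hw i h1 => hv ?_⟩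
    · rw [← hΓA, Module.finrank_eq_card_basis snf.bN, Fintype.card_fin]
      exact min_le_left _ _
    · rw [htens]
      exact ⟨⟨w, hAA w.2⟩ ⊗ₜ ⟨v, hv'⟩, rfl⟩
    · simpa [h1] using smul_mem_right_of_tmul_mem_range_map (snf.a_ne_zero i)
        snf.coord_apply_embedding_eq_smul_coord hw

/-- Lattice rigidity in a tensor product over a DVR: if `Γ = Γ_A ⊗ Γ_B` is a full-rank
tensor-product lattice in `A ⊗ B`, and `Γ' ⊇ Γ` is a full-rank lattice with `Γ'/Γ`
nonzero and killed by the uniformizer `l`, then `Γ'` can only itself be a tensor product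
`Γ'_A ⊗ Γ'_B` (with `Γ_A ⊆ Γ'_A`, `Γ_B ⊆ Γ'_B`) if the length of `Γ'/Γ` is at least
`min (rank A) (rank B)`, expressed as the existence of a strictly increasing chain of
submodules of that length in `Γ'/Γ`. -/
theorem stmt2 {R : Type*} [CommRing R] [IsDomain R] [IsDiscreteValuationRing R]
    (l : R) (hl : Irreducible l)
    {A B : Type*} [AddCommGroup A] [Module R A] [Module.Free R A] [Module.Finite R A]
    [AddCommGroup B] [Module R B] [Module.Free R B] [Module.Finite R B]
    (ΓA : Submodule R A) (ΓB : Submodule R B)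
    (hΓA : Module.finrank R ΓA = Module.finrank R A)
    (hΓB : Module.finrank R ΓB = Module.finrank R B)
    (Γ' : Submodule R (A ⊗[R] B))
    (hle : LinearMap.range (TensorProduct.map ΓA.subtype ΓB.subtype) ≤ Γ')
    (hΓ' : Module.finrank R Γ' = Module.finrank R (A ⊗[R] B))
    (hkill : ∀ x ∈ Γ', l • x ∈ LinearMap.range (TensorProduct.map ΓA.subtype ΓB.subtype))
    (hne : LinearMap.range (TensorProduct.map ΓA.subtype ΓB.subtype) ≠ Γ')
    (Γ'A : Submodule R A) (Γ'B : Submodule R B)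
    (hAA : ΓA ≤ Γ'A) (hBB : ΓB ≤ Γ'B)
    (htens : Γ' = LinearMap.range (TensorProduct.map Γ'A.subtype Γ'B.subtype)) :
    ∃ s : Fin (min (Module.finrank R A) (Module.finrank R B) + 1) →
      Submodule R (Γ' ⧸ (LinearMap.range
        (TensorProduct.map ΓA.subtype ΓB.subtype)).comap Γ'.subtype),
      StrictMono s :=
  stmt2_general ΓA ΓB hΓA hΓB Γ' hne Γ'A Γ'B hAA hBB htens
end

section
/- Let R be a discrete valuation ring and f : A → B a morphism of finite free R-modules. Then coker(f) is torsion-free if and only if f ⊗ id_k : A ⊗ k → B ⊗ k and f ⊗ id_K : A ⊗ K → B ⊗ K have kernels of the same dimension, where k is the residue field and K the fraction field. -/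
/-!
Put `range f ⊆ B` in Smith normal form: it is spanned by vectors `aᵢ • e_{g i}` with `aᵢ ≠ 0`,
for a basis `e` of `B`. After base change to a field `S` the range of `f ⊗ S` is spanned by the
images of these vectors, so rank–nullity gives
`dim ker (f ⊗ S) = rank A - #{i | aᵢ ≠ 0 in S}`. Over `K` every `aᵢ` survives, over `k` exactly
the units do, and `coker f` is torsion-free exactly when every `aᵢ` is a unit.
-/

theorem LinearMap.range_baseChange {R S M N : Type*} [CommSemiring R] [Semiring S] [Algebra R S]
    [AddCommMonoid M] [Module R M] [AddCommMonoid N] [Module R N] (f : M →ₗ[R] N) :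
    range (f.baseChange S) = (range f).baseChange S := by
  have hsurj : Function.Surjective (f.rangeRestrict.baseChange S) := by
    rw [baseChange_eq_ltensor]
    exact f.rangeRestrict.lTensor_surjective S f.surjective_rangeRestrict
  rw [Submodule.baseChange, ← range_comp_of_range_eq_top _ (range_eq_top.2 hsurj),
    ← baseChange_comp, subtype_comp_codRestrict]

open Submodule Set in
theorem LinearIndependent.finrank_span_smul_eq_ncard {F V ι : Type*} [Field F] [AddCommGroup V]
    [Module F V] [Finite ι] {v : ι → V} (hv : LinearIndependent F v) (c : ι → F) :
    Module.finrank F (span F (range fun i => c i • v i)) = {i | c i ≠ 0}.ncard := by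
  have hspan : span F (range fun i => c i • v i) =
      span F (range fun i : {i | c i ≠ 0} => c i • v i) := by
    refine le_antisymm (span_le.2 ?_) (span_mono ?_)
    · rintro - ⟨i, rfl⟩
      by_cases hc : c i = 0
      · simp [hc]
      · exact subset_span ⟨⟨i, hc⟩, rfl⟩
    · rintro - ⟨i, rfl⟩
      exact ⟨i, rfl⟩
  have hli : LinearIndependent F fun i : {i | c i ≠ 0} => c i • v i :=
    (hv.comp _ Subtype.val_injective).units_smul fun i => Units.mk0 _ i.2
  have := Fintype.ofFinite ι
  classical
  rw [hspan, finrank_span_eq_card hli, ← Nat.card_eq_fintype_card, Nat.card_coe_set_eq]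

open Submodule Set in
theorem Module.Basis.noZeroSMulDivisors_quotient_span_image {R M ι : Type*} [CommRing R]
    [IsDomain R] [AddCommGroup M] [Module R M] (b : Basis ι R M) (s : Set ι) :
    NoZeroSMulDivisors R (M ⧸ span R (b '' s)) := by
  refine ⟨fun {c x} hcx => or_iff_not_imp_left.2 fun hc => ?_⟩
  obtain ⟨y, rfl⟩ := Submodule.Quotient.mk_surjective _ x
  rw [← Quotient.mk_smul, Quotient.mk_eq_zero, b.mem_span_image, map_smul,
    Finsupp.support_smul_eq hc] at hcx
  rwa [Quotient.mk_eq_zero, b.mem_span_image]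

namespace Module.Basis.SmithNormalForm

open Submodule Set Module

variable {R M ι : Type*} [CommRing R] [AddCommGroup M] [Module R M] {N : Submodule R M} {n : ℕ}
  (snf : Basis.SmithNormalForm N ι n)

theorem span_range_smul : span R (range fun i => snf.a i • snf.bM (snf.f i)) = N := by
  have : (fun i => snf.a i • snf.bM (snf.f i)) = N.subtype ∘ snf.bN :=
    funext fun i => (snf.snf i).symm
  rw [this, range_comp, ← map_span, snf.bN.span_eq, map_subtype_top]

theorem a_ne_zero_s4 [Nontrivial R] (i : Fin n) : snf.a i ≠ 0 := fun h =>
  snf.bN.ne_zero i (Subtype.ext (by rw [snf.snf, h, zero_smul]; rfl))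

theorem isUnit_a_of_mem {i : Fin n} (h : snf.bM (snf.f i) ∈ N) : IsUnit (snf.a i) := by
  have := snf.repr_apply_embedding_eq_repr_smul ⟨_, h⟩ (i := i)
  rw [repr_self, Finsupp.single_eq_same, map_smul, Finsupp.smul_apply, smul_eq_mul] at this
  exact IsUnit.of_mul_eq_one _ this.symm

theorem eq_span_image_of_forall_isUnit (h : ∀ i, IsUnit (snf.a i)) :
    N = span R (snf.bM '' range snf.f) := by
  refine le_antisymm ?_ (span_le.2 ?_)
  · calc N = span R (range fun i => snf.a i • snf.bM (snf.f i)) := snf.span_range_smul.symm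
      _ ≤ span R (snf.bM '' range snf.f) :=
        span_le.2 <| range_subset_iff.2 fun i =>
          smul_mem _ _ (subset_span ⟨snf.f i, mem_range_self i, rfl⟩)
  · rintro - ⟨-, ⟨i, rfl⟩, rfl⟩
    rw [SetLike.mem_coe, ← smul_mem_iff_of_isUnit N (h i), ← snf.snf]
    exact (snf.bN i).2

theorem noZeroSMulDivisors_quotient_iff [IsDomain R] :
    NoZeroSMulDivisors R (M ⧸ N) ↔ ∀ i, IsUnit (snf.a i) := by
  refine ⟨fun _ i => snf.isUnit_a_of_mem ?_, fun h => ?_⟩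
  · have : snf.a i • Submodule.Quotient.mk (p := N) (snf.bM (snf.f i)) = 0 := by
      rw [← Quotient.mk_smul, Quotient.mk_eq_zero, ← snf.snf]
      exact (snf.bN i).2
    exact (Quotient.mk_eq_zero N).1 ((smul_eq_zero.1 this).resolve_left (snf.a_ne_zero_s4 i))
  · rw [snf.eq_span_image_of_forall_isUnit h]
    exact snf.bM.noZeroSMulDivisors_quotient_span_image _

theorem baseChange_eq_span (S : Type*) [CommRing S] [Algebra R S] :
    N.baseChange S =
      span S (range fun i => algebraMap R S (snf.a i) • snf.bM.baseChange S (snf.f i)) := by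
  nth_rw 1 [← snf.span_range_smul]
  rw [baseChange_span, ← range_comp]
  congr 2
  funext i
  simp

theorem finrank_ker_baseChange_add_ncard {A B : Type*} [StrongRankCondition R]
    [AddCommGroup A] [Module R A] [Free R A] [Module.Finite R A]
    [AddCommGroup B] [Module R B] {f : A →ₗ[R] B}
    (snf : Basis.SmithNormalForm (LinearMap.range f) ι n) (S : Type*) [Field S] [Algebra R S] :
    finrank S (LinearMap.ker (f.baseChange S)) + {i | algebraMap R S (snf.a i) ≠ 0}.ncard =
      finrank R A := by
  have hli : LinearIndependent S fun i => snf.bM.baseChange S (snf.f i) :=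
    (snf.bM.baseChange S).linearIndependent.comp _ snf.f.injective
  rw [← finrank_baseChange (R := S) (S := R) (M' := A),
    ← (f.baseChange S).finrank_range_add_finrank_ker, LinearMap.range_baseChange,
    snf.baseChange_eq_span, hli.finrank_span_smul_eq_ncard, add_comm]

end Module.Basis.SmithNormalForm

/-- Strictness criterion over a DVR: for a map `f : A → B` of finite free `R`-modules,
`coker f` is torsion-free iff the kernels of `f ⊗ k` and `f ⊗ K` have the same
dimension, where `k` is the residue field and `K` the fraction field. -/
theorem stmt4 {R : Type*} [CommRing R] [IsDomain R] [IsDiscreteValuationRing R]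
    {A B : Type*} [AddCommGroup A] [Module R A] [Module.Free R A] [Module.Finite R A]
    [AddCommGroup B] [Module R B] [Module.Free R B] [Module.Finite R B]
    (f : A →ₗ[R] B) :
    NoZeroSMulDivisors R (B ⧸ LinearMap.range f) ↔
      Module.finrank (IsLocalRing.ResidueField R)
          (LinearMap.ker (LinearMap.baseChange (IsLocalRing.ResidueField R) f)) =
        Module.finrank (FractionRing R)
          (LinearMap.ker (LinearMap.baseChange (FractionRing R) f)) := by
  obtain ⟨n, snf⟩ := (LinearMap.range f).smithNormalForm (Module.Free.chooseBasis R B)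
  have hk := snf.finrank_ker_baseChange_add_ncard (IsLocalRing.ResidueField R)
  have hK := snf.finrank_ker_baseChange_add_ncard (FractionRing R)
  have hunits : {i | algebraMap R (IsLocalRing.ResidueField R) (snf.a i) ≠ 0} =
      {i | IsUnit (snf.a i)} := by
    simp only [IsLocalRing.ResidueField.algebraMap_eq, IsLocalRing.residue_ne_zero_iff_isUnit]
  have hall : {i | algebraMap R (FractionRing R) (snf.a i) ≠ 0} = Set.univ :=
    Set.eq_univ_of_forall fun i =>
      (map_ne_zero_iff _ (IsFractionRing.injective R _)).2 (snf.a_ne_zero_s4 i)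
  rw [hunits] at hk
  rw [hall, Set.ncard_univ, Nat.card_fin] at hK
  have hcount : (∀ i, IsUnit (snf.a i)) ↔ {i | IsUnit (snf.a i)}.ncard = n := by
    simpa [Set.eq_univ_iff_forall] using Set.eq_univ_iff_ncard {i | IsUnit (snf.a i)}
  rw [snf.noZeroSMulDivisors_quotient_iff, hcount]
  omega
end
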